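/- arXiv:1608.07516 — 5 statements merged into one kernel-verified Lean document; each statement's English description precedes it below -/
import Mathlib

section
/- For an open interval (a,b), f ∈ C^{n−1}(a,b), and any tuple of (not necessarily distinct) real numbers λ₁, ..., λₙ ∈ (a,b), there exists ξ ∈ [min λᵢ, max λᵢ] such that [λ₁, ..., λₙ]_f = f^{(n−1)}(ξ)/(n−1)!. -/
/-- Recursive divided difference on a list of points (for distinct points). -/
noncomputable def divDiff {K : Type*} [Field K] (f : K → K) : List K → K
  | [] => 0
  | [x] => f x
  | x :: y :: xs =>
      (divDiff f ((x :: y :: xs).dropLast) - divDiff f (y :: xs)) /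
        (x - (y :: xs).getLast (List.cons_ne_nil y xs))
  termination_by l => l.length
  decreasing_by all_goals simp [List.length_dropLast]

open Set

/-! For distinct nodes the divided difference is the leading coefficient of the Lagrange
interpolant `P` of `f`. Since `f - P` vanishes at the `n` nodes, Rolle's theorem applied `n - 1`
times gives a zero `ξ` of `(f - P)^{(n-1)}` between the extreme nodes, and there
`f^{(n-1)}(ξ) = (n-1)! · lead P`. A tuple with repeated nodes is a limit of tuples of distinct
nodes; the corresponding points `ξ` have a limit point between the extreme nodes of the limit
tuple, and continuity of `D` and of `f^{(n-1)}` carries the identity over. -/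

open Finset Polynomial Lagrange Filter Topology Function
open scoped Nat

theorem Lagrange.coeff_interpolate_succ {F ι : Type*} [Field F] [DecidableEq ι] {s : Finset ι}
    {v : ι → F} (hvs : Set.InjOn v s) (r : ι → F) {i j : ι} (hi : i ∈ s) (hj : j ∈ s)
    (hij : i ≠ j) {k : ℕ} (hk : #s = k + 2) :
    (interpolate s v r).coeff (k + 1) =
      ((interpolate (s.erase j) v r).coeff k - (interpolate (s.erase i) v r).coeff k) /
        (v i - v j) := by
  have htop : ∀ l ∈ s, (interpolate (s.erase l) v r).coeff (k + 1) = 0 := fun l hl =>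
    coeff_eq_zero_of_degree_lt <| by
      simpa [card_erase_of_mem hl, hk] using
        degree_interpolate_lt r (hvs.mono (s.erase_subset l))
  have hv : v i - v j ≠ 0 := sub_ne_zero.mpr fun h => hij (hvs hi hj h)
  rw [interpolate_eq_add_interpolate_erase r hvs hi hj hij, coeff_add, basisDivisor,
    basisDivisor, mul_left_comm, mul_left_comm _ (C _), coeff_C_mul, coeff_C_mul,
    coeff_mul_X_sub_C, coeff_mul_X_sub_C, htop i hi, htop j hj, ← neg_sub (v i), inv_neg]
  field_simp
  ring

theorem divDiff_eq_coeff_interpolate {K : Type*} [Field K] [DecidableEq K] (f : K → K) :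
    ∀ l : List K, l.Nodup → l ≠ [] →
      divDiff f l = (interpolate l.toFinset id f).coeff (l.length - 1)
  | [], _, h => absurd rfl h
  | [x], _, _ => by simp [divDiff]
  | x :: y :: xs, hnd, _ => by
    set t := (y :: xs).getLast (List.cons_ne_nil y xs)
    have hxt : x ≠ t := fun h => (List.nodup_cons.mp hnd).1 (h ▸ List.getLast_mem _)
    have hsplit : (x :: y :: xs).dropLast ++ [t] = x :: y :: xs :=
      List.dropLast_append_getLast (List.cons_ne_nil x (y :: xs))
    have hdrop : (x :: y :: xs).dropLast.toFinset = (x :: y :: xs).toFinset.erase t := by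
      have htdrop : t ∉ (x :: y :: xs).dropLast := fun h =>
        List.disjoint_of_nodup_append (by rw [hsplit]; exact hnd) h (List.mem_singleton_self t)
      conv_rhs => rw [← hsplit]
      ext z
      simp only [mem_erase, List.mem_toFinset, List.mem_append, List.mem_singleton]
      grind
    have htail : (y :: xs).toFinset = (x :: y :: xs).toFinset.erase x := by
      rw [List.toFinset_cons (a := x), erase_insert (by simpa using (List.nodup_cons.mp hnd).1)]
    have hcard : #(x :: y :: xs).toFinset = xs.length + 2 := by
      rw [List.toFinset_card_of_nodup hnd]; rfl
    rw [divDiff, divDiff_eq_coeff_interpolate f _ (hnd.sublist (List.dropLast_sublist _)) (by simp),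
      divDiff_eq_coeff_interpolate f _ hnd.of_cons (by simp), List.length_dropLast,
      show (x :: y :: xs).length - 1 = xs.length + 1 from rfl,
      coeff_interpolate_succ (injOn_id _) f (by simp)
        (List.mem_toFinset.mpr (List.mem_cons_of_mem _ (List.getLast_mem _))) hxt hcard,
      hdrop, ← htail]
    rfl
  termination_by l => l.length

theorem iterate_deriv_polynomial_eval {𝕜 : Type*} [NontriviallyNormedField 𝕜] (k : ℕ)
    (p : 𝕜[X]) : deriv^[k] (fun x => p.eval x) = fun x => (derivative^[k] p).eval x := by
  induction k generalizing p with
  | zero => rfl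
  | succ k ih =>
    have hderiv : deriv (fun x => p.eval x) = fun x => p.derivative.eval x :=
      funext fun _ => p.deriv
    rw [Function.iterate_succ_apply, hderiv, ih, Function.iterate_succ_apply]

theorem iteratedDeriv_polynomial_eval_of_natDegree_le {𝕜 : Type*} [NontriviallyNormedField 𝕜]
    {p : 𝕜[X]} {n : ℕ} (hp : p.natDegree ≤ n) (x : 𝕜) :
    iteratedDeriv n (fun x => p.eval x) x = n ! * p.coeff n := by
  have hconst : (derivative^[n] p).natDegree = 0 :=
    Nat.eq_zero_of_le_zero ((natDegree_iterate_derivative p n).trans (by omega))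
  rw [iteratedDeriv_eq_iterate, iterate_deriv_polynomial_eval]
  change (derivative^[n] p).eval x = _
  rw [eq_C_of_natDegree_eq_zero hconst, eval_C,
    coeff_iterate_derivative, zero_add, Nat.descFactorial_self, nsmul_eq_mul]

theorem exists_iteratedDerivWithin_eq_zero {a b : ℝ} {k : ℕ} {g : ℝ → ℝ}
    (hg : ContDiffOn ℝ k g (Ioo a b)) {x : Fin (k + 1) → ℝ} (hx : StrictMono x)
    (hxab : ∀ i, x i ∈ Ioo a b) (hgx : ∀ i, g (x i) = 0) :
    ∃ ξ ∈ Icc (x 0) (x (Fin.last k)), iteratedDerivWithin k g (Ioo a b) ξ = 0 := by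
  induction k generalizing g with
  | zero => exact ⟨x 0, left_mem_Icc.2 le_rfl, by simpa using hgx 0⟩
  | succ k ih =>
    have hgap (i : Fin (k + 1)) : Icc (x i.castSucc) (x i.succ) ⊆ Ioo a b :=
      Icc_subset_Ioo (hxab _).1 (hxab _).2
    have hrolle (i : Fin (k + 1)) :
        ∃ c ∈ Ioo (x i.castSucc) (x i.succ), derivWithin g (Ioo a b) c = 0 := by
      obtain ⟨c, hc, hc0⟩ := exists_deriv_eq_zero (hx i.castSucc_lt_succ)
        (hg.continuousOn.mono (hgap i)) (by rw [hgx, hgx])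
      exact ⟨c, hc, by rwa [derivWithin_of_isOpen isOpen_Ioo (hgap i (Ioo_subset_Icc_self hc))]⟩
    choose y hy hy0 using hrolle
    have hymono : StrictMono y := fun i j hij =>
      calc y i < x i.succ := (hy i).2
        _ ≤ x j.castSucc := hx.monotone (Fin.succ_le_castSucc_iff.mpr hij)
        _ < y j := (hy j).1
    obtain ⟨ξ, hξ, hξ0⟩ := ih (hg.derivWithin isOpen_Ioo.uniqueDiffOn (by norm_cast)) hymono
      (fun i => hgap i (Ioo_subset_Icc_self (hy i))) hy0
    refine ⟨ξ, ⟨(hy 0).1.le.trans hξ.1, hξ.2.trans (hy (Fin.last k)).2.le⟩, ?_⟩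
    rwa [iteratedDerivWithin_succ']

theorem exists_iteratedDerivWithin_eq_factorial_mul_coeff_interpolate {a b : ℝ} {n : ℕ}
    {f : ℝ → ℝ} (hf : ContDiffOn ℝ n f (Ioo a b)) {s : Finset ℝ} (hs : #s = n + 1)
    (hsab : ↑s ⊆ Ioo a b) :
    ∃ ξ ∈ Icc (sInf (s : Set ℝ)) (sSup (s : Set ℝ)),
      iteratedDerivWithin n f (Ioo a b) ξ = n ! * (interpolate s id f).coeff n := by
  set P := interpolate s id f
  have hP : P.natDegree ≤ n := by
    have := degree_interpolate_le f (s := s) (injOn_id _)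
    rwa [hs, Nat.add_sub_cancel, ← natDegree_le_iff_degree_le] at this
  have hPsmooth : ContDiff ℝ n fun t => P.eval t := by
    simpa using P.contDiff_aeval (𝕜 := ℝ) n
  set x := s.orderEmbOfFin hs
  have hxs (i : Fin (n + 1)) : x i ∈ s := s.orderEmbOfFin_mem hs i
  obtain ⟨ξ, hξ, hξ0⟩ := exists_iteratedDerivWithin_eq_zero (g := f - fun t => P.eval t)
    (hf.sub hPsmooth.contDiffOn) x.strictMono (fun i => hsab (hxs i))
    (fun i => sub_eq_zero.mpr (eval_interpolate_at_node f (injOn_id _) (hxs i)).symm)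
  have hξab : ξ ∈ Ioo a b := Icc_subset_Ioo (hsab (hxs 0)).1 (hsab (hxs _)).2 hξ
  refine ⟨ξ, ⟨(csInf_le s.bddBelow (hxs 0)).trans hξ.1,
    hξ.2.trans (le_csSup s.bddAbove (hxs _))⟩, ?_⟩
  rwa [iteratedDerivWithin_sub hξab isOpen_Ioo.uniqueDiffOn (hf.contDiffWithinAt hξab)
    hPsmooth.contDiffWithinAt,
    iteratedDerivWithin_of_isOpen (f := fun t => P.eval t) isOpen_Ioo hξab,
    iteratedDeriv_polynomial_eval_of_natDegree_le hP, sub_eq_zero] at hξ0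

theorem exists_divDiff_ofFn_eq_iteratedDerivWithin {a b : ℝ} {n : ℕ} {f : ℝ → ℝ}
    (hf : ContDiffOn ℝ n f (Ioo a b)) {Λ : Fin (n + 1) → ℝ} (hΛ : ∀ i, Λ i ∈ Ioo a b)
    (hinj : Injective Λ) :
    ∃ ξ ∈ Icc (⨅ i, Λ i) (⨆ i, Λ i),
      divDiff f (List.ofFn Λ) = iteratedDerivWithin n f (Ioo a b) ξ / n ! := by
  have hnd : (List.ofFn Λ).Nodup := List.nodup_ofFn.mpr hinj
  have hrange : ((List.ofFn Λ).toFinset : Set ℝ) = range Λ := by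
    ext; simp only [Finset.mem_coe, List.mem_toFinset, List.mem_ofFn']
  obtain ⟨ξ, hξ, hξeq⟩ := exists_iteratedDerivWithin_eq_factorial_mul_coeff_interpolate hf
    (by rw [List.toFinset_card_of_nodup hnd, List.length_ofFn])
    (by rw [hrange]; rintro _ ⟨i, rfl⟩; exact hΛ i)
  rw [hrange] at hξ
  refine ⟨ξ, hξ, ?_⟩
  rw [divDiff_eq_coeff_interpolate f _ hnd (by simp), hξeq, List.length_ofFn, Nat.add_sub_cancel]
  field_simp

theorem Filter.Tendsto.ciInf_apply {α ι L : Type*} [Fintype ι] [Nonempty ι]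
    [ConditionallyCompleteLattice L] [TopologicalSpace L] [ContinuousInf L] {l : Filter α}
    {F : α → ι → L} {Λ : ι → L} (h : Tendsto F l (𝓝 Λ)) :
    Tendsto (fun a => ⨅ i, F a i) l (𝓝 (⨅ i, Λ i)) := by
  simp only [← Finset.inf'_univ_eq_ciInf]
  exact finset_inf'_nhds_apply _ fun i _ => ((continuous_apply i).tendsto Λ).comp h

theorem Filter.Tendsto.ciSup_apply {α ι L : Type*} [Fintype ι] [Nonempty ι]
    [ConditionallyCompleteLattice L] [TopologicalSpace L] [ContinuousSup L] {l : Filter α}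
    {F : α → ι → L} {Λ : ι → L} (h : Tendsto F l (𝓝 Λ)) :
    Tendsto (fun a => ⨆ i, F a i) l (𝓝 (⨆ i, Λ i)) := by
  simp only [← Finset.sup'_univ_eq_ciSup]
  exact finset_sup'_nhds_apply _ fun i _ => ((continuous_apply i).tendsto Λ).comp h

theorem Set.OrdConnected.Icc_ciInf_ciSup_subset {ι α : Type*} [Finite ι] [Nonempty ι]
    [ConditionallyCompleteLinearOrder α] {s : Set α} (hs : s.OrdConnected) {Λ : ι → α}
    (hΛ : ∀ i, Λ i ∈ s) : Icc (⨅ i, Λ i) (⨆ i, Λ i) ⊆ s := by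
  obtain ⟨i, hi⟩ := exists_eq_ciInf_of_finite (f := Λ)
  obtain ⟨j, hj⟩ := exists_eq_ciSup_of_finite (f := Λ)
  rw [← hi, ← hj]
  exact hs.out (hΛ i) (hΛ j)

theorem dense_setOf_injective {ι : Type*} [Finite ι] :
    Dense {Λ : ι → ℝ | Injective Λ} := by
  obtain ⟨n, ⟨σ⟩⟩ := Finite.exists_equiv_fin ι
  set e : ι → ℝ := fun i => (σ i : ℕ)
  have he : Injective e := fun i j h => σ.injective (Fin.ext (Nat.cast_injective h))
  intro Λ
  have hlim : Tendsto (fun t : ℝ => Λ + t • e) (𝓝[≠] 0) (𝓝 Λ) := by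
    have hcont : Continuous fun t : ℝ => Λ + t • e := by fun_prop
    simpa using (hcont.tendsto 0).mono_left nhdsWithin_le_nhds
  -- `Λ + t • e` is injective as soon as `t` avoids the finitely many collision times
  refine mem_closure_of_tendsto hlim ?_
  filter_upwards [nhdsNE_le_cofinite (0 : ℝ) (finite_range fun p : ι × ι =>
    (Λ p.2 - Λ p.1) / (e p.1 - e p.2)).compl_mem_cofinite] with t ht i j hij
  by_contra hne
  refine ht ⟨(i, j), ?_⟩
  have : e i - e j ≠ 0 := sub_ne_zero.mpr (he.ne hne)
  simp only [Pi.add_apply, Pi.smul_apply, smul_eq_mul] at hij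
  field_simp
  linarith

theorem exists_mem_Icc_eq_of_tendsto {Y : Type*} [TopologicalSpace Y] [T2Space Y] {U : Set ℝ}
    (hU : IsOpen U) {h : ℝ → Y} (hh : ContinuousOn h U) {L M : ℝ} (hLM : Icc L M ⊆ U)
    {lo hi ξ : ℕ → ℝ} (hlo : Tendsto lo atTop (𝓝 L)) (hhi : Tendsto hi atTop (𝓝 M))
    (hξ : ∀ k, ξ k ∈ Icc (lo k) (hi k)) {y : Y}
    (hy : Tendsto (fun k => h (ξ k)) atTop (𝓝 y)) :
    ∃ x ∈ Icc L M, h x = y := by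
  obtain ⟨A, hA⟩ := hlo.bddBelow_range
  obtain ⟨B, hB⟩ := hhi.bddAbove_range
  obtain ⟨x, -, ψ, hψ, hξψ⟩ := (isCompact_Icc (a := A) (b := B)).tendsto_subseq fun k =>
    ⟨(hA (mem_range_self k)).trans (hξ k).1, (hξ k).2.trans (hB (mem_range_self k))⟩
  have hψ' := hψ.tendsto_atTop
  have hx : x ∈ Icc L M :=
    ⟨le_of_tendsto_of_tendsto' (hlo.comp hψ') hξψ fun k => (hξ (ψ k)).1,
      le_of_tendsto_of_tendsto' hξψ (hhi.comp hψ') fun k => (hξ (ψ k)).2⟩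
  exact ⟨x, hx, tendsto_nhds_unique
    ((hh.continuousAt (hU.mem_nhds (hLM hx))).tendsto.comp hξψ) (hy.comp hψ')⟩

/-- Mean value theorem for divided differences: if `D` is the continuous extension of the
divided difference of a `C^{n-1}` function `f` to all tuples in `(a,b)^n`, then its value
at any tuple is `f^{(n-1)}(ξ)/(n-1)!` for some `ξ` between the smallest and largest point. -/
theorem stmt1 (n : ℕ) (hn : 1 ≤ n) (a b : ℝ) (f : ℝ → ℝ)
    (hf : ContDiffOn ℝ (n - 1 : ℕ) f (Ioo a b))
    (D : (Fin n → ℝ) → ℝ)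
    (hDcont : ContinuousOn D {Λ | ∀ i, Λ i ∈ Ioo a b})
    (hDagree : ∀ Λ : Fin n → ℝ, (∀ i, Λ i ∈ Ioo a b) → Function.Injective Λ →
      D Λ = divDiff f (List.ofFn Λ)) :
    ∀ Λ : Fin n → ℝ, (∀ i, Λ i ∈ Ioo a b) →
      ∃ ξ ∈ Icc (⨅ i, Λ i) (⨆ i, Λ i),
        D Λ = iteratedDerivWithin (n - 1) f (Ioo a b) ξ / (Nat.factorial (n - 1) : ℝ) := by
  obtain ⟨m, rfl⟩ : ∃ m, n = m + 1 := ⟨n - 1, by omega⟩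
  rw [Nat.add_sub_cancel] at hf ⊢
  intro Λ hΛ
  set S : Set (Fin (m + 1) → ℝ) := {Λ | ∀ i, Λ i ∈ Ioo a b}
  have hS : IsOpen S := by
    simp only [S, ofPred_forall]
    exact isOpen_iInter_of_finite fun i => isOpen_Ioo.preimage (continuous_apply i)
  obtain ⟨Λs, hΛsS, hΛs⟩ :=
    mem_closure_iff_seq_limit.mp (dense_setOf_injective.open_subset_closure_inter hS hΛ)
  have hmvt (k : ℕ) : ∃ ξ ∈ Icc (⨅ i, Λs k i) (⨆ i, Λs k i),
      D (Λs k) = iteratedDerivWithin m f (Ioo a b) ξ / m ! := by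
    rw [hDagree _ (hΛsS k).1 (hΛsS k).2]
    exact exists_divDiff_ofFn_eq_iteratedDerivWithin hf (hΛsS k).1 (hΛsS k).2
  choose ξ hξ hDξ using hmvt
  have hDlim : Tendsto (fun k => D (Λs k)) atTop (𝓝 (D Λ)) :=
    (hDcont Λ hΛ).tendsto.comp <|
      tendsto_nhdsWithin_iff.mpr ⟨hΛs, .of_forall fun k => (hΛsS k).1⟩
  obtain ⟨x, hx, hxD⟩ := exists_mem_Icc_eq_of_tendsto isOpen_Ioo
    ((hf.continuousOn_iteratedDerivWithin le_rfl isOpen_Ioo.uniqueDiffOn).div_const _)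
    (ordConnected_Ioo.Icc_ciInf_ciSup_subset hΛ) hΛs.ciInf_apply hΛs.ciSup_apply hξ
    (by simpa only [hDξ] using hDlim)
  exact ⟨x, hx, hxD.symm⟩
end

section
/- Let λ₁, ..., λₙ be distinct reals. Define I_i(t) = Res_{z=λᵢ} S(z,t) where S(z,t) = −(z−t)^{2n−2}/p_Λ(z)² and p_Λ(z) = ∏(z−λᵢ). Then each I_i is a polynomial in t satisfying I_i(λᵢ) = 0, and I(t) = Σ_{i : λᵢ < t} I_i(t) is a continuous function supported on [min λᵢ, max λᵢ]. -/
/-!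
Write `Qᵢ = ∏_{k ≠ i} (z - λₖ)²`. The residue of `N / ∏ₖ (z - λₖ)²` at the double pole `λᵢ` is
`(N / Qᵢ)'(λᵢ)`. For `N = -(z - t)^(2n-2)` this is an explicit polynomial in `t` with a zero of
order `2n - 3` at `λᵢ`, so each summand of `I` switches on continuously as `t` crosses `λᵢ`.
Beyond the largest `λᵢ`, `I(t)` is the sum of all residues, which vanishes because
`deg N ≤ 2n - 2`: the Hermite interpolant `∑ᵢ (N(λᵢ)/Qᵢ(λᵢ) + Iᵢ (z - λᵢ)) Qᵢ` agrees with `N` to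
second order at every `λᵢ`, hence equals `N` by degree, and its coefficient of `z^(2n-1)` is
`∑ᵢ Iᵢ`.
-/

open Finset Set Polynomial

namespace Polynomial

theorem sq_X_sub_C_dvd_iff {R : Type*} [CommRing R] {p : R[X]} {a : R} :
    (X - C a) ^ 2 ∣ p ↔ p.eval a = 0 ∧ p.derivative.eval a = 0 := by
  rcases eq_or_ne p 0 with rfl | hp
  · simp
  rw [← le_rootMultiplicity_iff hp]
  exact one_lt_rootMultiplicity_iff_isRoot hp

section Field

variable {K : Type*} [Field K]

/-- `(N / Q)'(a)`, by the quotient rule: the residue of `N / ((X - a)² Q)` at `a`. -/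
noncomputable def ratDeriv (N Q : K[X]) (a : K) : K :=
  (N.derivative.eval a * Q.eval a - N.eval a * Q.derivative.eval a) / Q.eval a ^ 2

noncomputable def hermiteTerm (N Q : K[X]) (a : K) : K[X] :=
  (C (N.eval a / Q.eval a) + C (ratDeriv N Q a) * (X - C a)) * Q

theorem sq_X_sub_C_dvd_sub_hermiteTerm (N Q : K[X]) {a : K} (hQ : Q.eval a ≠ 0) :
    (X - C a) ^ 2 ∣ N - hermiteTerm N Q a := by
  rw [sq_X_sub_C_dvd_iff, hermiteTerm, ratDeriv]
  constructor
  · simp only [eval_sub, eval_mul, eval_add, eval_C, eval_X, sub_self]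
    field_simp
    ring
  · simp only [derivative_sub, derivative_mul, derivative_add, derivative_C, derivative_X,
      eval_sub, eval_mul, eval_add, eval_C, eval_X, eval_zero, eval_one, sub_self]
    field_simp
    ring

theorem natDegree_hermiteTerm_le (N Q : K[X]) (a : K) :
    (hermiteTerm N Q a).natDegree ≤ Q.natDegree + 1 := by
  refine natDegree_mul_le.trans (add_comm Q.natDegree 1 ▸ Nat.add_le_add_right ?_ _)
  refine natDegree_add_le_of_degree_le ((natDegree_C _).trans_le zero_le_one) ?_
  exact natDegree_C_mul_le _ _ |>.trans (natDegree_X_sub_C _).le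

theorem Monic.coeff_hermiteTerm {Q : K[X]} (hQ : Q.Monic) (N : K[X]) (a : K) :
    (hermiteTerm N Q a).coeff (Q.natDegree + 1) = ratDeriv N Q a := by
  have hXQ : ((X - C a) * Q).coeff (Q.natDegree + 1) = 1 := by
    rw [← (monic_X_sub_C a).mul hQ |>.coeff_natDegree, (monic_X_sub_C a).natDegree_mul hQ,
      natDegree_X_sub_C, add_comm]
  rw [hermiteTerm, add_mul, mul_assoc, coeff_add, coeff_C_mul, coeff_C_mul, hXQ,
    coeff_eq_zero_of_natDegree_lt (Nat.lt_succ_self _)]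
  ring

end Field

section Nodes

variable {K ι : Type*} [Field K] [Fintype ι] {lam : ι → K}

theorem eq_zero_of_forall_sq_X_sub_C_dvd (hlam : Function.Injective lam) {E : K[X]}
    (hE : E.natDegree < 2 * Fintype.card ι) (hdvd : ∀ i, (X - C (lam i)) ^ 2 ∣ E) : E = 0 := by
  have hprod : ∏ i, (X - C (lam i)) ^ 2 ∣ E :=
    prod_dvd_of_coprime (fun i _ j _ hij => (pairwise_coprime_X_sub_C hlam hij).pow)
      fun i _ => hdvd i
  refine eq_zero_of_dvd_of_natDegree_lt hprod ?_
  rw [natDegree_prod_of_monic _ _ fun _ _ => (monic_X_sub_C _).pow 2]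
  simpa [mul_comm] using hE

variable [DecidableEq ι] (lam)

noncomputable def sqCofactor (i : ι) : K[X] :=
  ∏ k ∈ univ.erase i, (X - C (lam k)) ^ 2

theorem sqCofactor_monic (i : ι) : (sqCofactor lam i).Monic :=
  monic_prod_of_monic _ _ fun _ _ => (monic_X_sub_C _).pow 2

theorem natDegree_sqCofactor (i : ι) :
    (sqCofactor lam i).natDegree = 2 * Fintype.card ι - 2 := by
  rw [sqCofactor, natDegree_prod_of_monic _ _ fun _ _ => (monic_X_sub_C _).pow 2]
  simp only [natDegree_pow, natDegree_X_sub_C, sum_const, card_erase_of_mem (mem_univ i),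
    card_univ, smul_eq_mul]
  omega

theorem sq_X_sub_C_dvd_sqCofactor {i j : ι} (hji : j ≠ i) :
    (X - C (lam j)) ^ 2 ∣ sqCofactor lam i :=
  dvd_prod_of_mem _ (mem_erase.mpr ⟨hji, mem_univ j⟩)

variable {lam}

theorem eval_sqCofactor_self_ne_zero (hlam : Function.Injective lam) (i : ι) :
    (sqCofactor lam i).eval (lam i) ≠ 0 := by
  rw [sqCofactor, eval_prod, prod_ne_zero_iff]
  intro k hk
  simpa [sub_eq_zero] using hlam.ne (mem_erase.mp hk).1.symm

theorem sum_hermiteTerm_sqCofactor (hlam : Function.Injective lam) {N : K[X]}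
    (hN : N.natDegree < 2 * Fintype.card ι) :
    ∑ i, hermiteTerm N (sqCofactor lam i) (lam i) = N := by
  refine (sub_eq_zero.mp (eq_zero_of_forall_sq_X_sub_C_dvd hlam ?_ fun j => ?_)).symm
  · have hterm (i : ι) : (hermiteTerm N (sqCofactor lam i) (lam i)).natDegree ≤
        2 * Fintype.card ι - 1 :=
      (natDegree_hermiteTerm_le _ _ _).trans (by rw [natDegree_sqCofactor]; omega)
    exact (natDegree_sub_le _ _).trans_lt
      (max_lt hN ((natDegree_sum_le_of_forall_le _ _ fun i _ => hterm i).trans_lt (by omega)))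
  · rw [← add_sum_erase _ _ (mem_univ j), sub_add_eq_sub_sub]
    exact dvd_sub (sq_X_sub_C_dvd_sub_hermiteTerm _ _ (eval_sqCofactor_self_ne_zero hlam j))
      (dvd_sum fun i hi => dvd_mul_of_dvd_right
        (sq_X_sub_C_dvd_sqCofactor lam (mem_erase.mp hi).1.symm) _)

theorem sum_ratDeriv_sqCofactor_eq_zero (hlam : Function.Injective lam) {N : K[X]}
    (hN : N.natDegree + 2 ≤ 2 * Fintype.card ι) :
    ∑ i, ratDeriv N (sqCofactor lam i) (lam i) = 0 := by
  have hcoeff := congrArg (coeff · (2 * Fintype.card ι - 1))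
    (sum_hermiteTerm_sqCofactor hlam (N := N) (by omega))
  simp only [finsetSum_coeff] at hcoeff
  rw [coeff_eq_zero_of_natDegree_lt (by omega)] at hcoeff
  rw [← hcoeff]
  refine sum_congr rfl fun i _ => ?_
  rw [← (sqCofactor_monic lam i).coeff_hermiteTerm, natDegree_sqCofactor]
  congr 2
  omega

end Nodes

theorem ratDeriv_neg_X_sub_C_pow {K : Type*} [Field K] (m : ℕ) (Q : K[X]) (a t : K) :
    ratDeriv (-(X - C t) ^ m) Q a =
      ((a - t) ^ m * Q.derivative.eval a - m * (a - t) ^ (m - 1) * Q.eval a) / Q.eval a ^ 2 := by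
  rw [ratDeriv, derivative_neg, derivative_X_sub_C_pow]
  simp only [eval_neg, eval_mul, eval_pow, eval_sub, eval_X, eval_C]
  ring

theorem exists_eval_eq_ratDeriv_neg_X_sub_C_pow {K : Type*} [Field K] (m : ℕ) (Q : K[X])
    (a : K) : ∃ P : K[X], ∀ t, ratDeriv (-(X - C t) ^ m) Q a = P.eval t := by
  refine ⟨C (Q.derivative.eval a / Q.eval a ^ 2) * (C a - X) ^ m
    - C (m * Q.eval a / Q.eval a ^ 2) * (C a - X) ^ (m - 1), fun t => ?_⟩
  simp only [ratDeriv_neg_X_sub_C_pow, eval_sub, eval_mul, eval_pow, eval_C, eval_X]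
  ring

theorem deriv_eval_div_eval {𝕜 : Type*} [NontriviallyNormedField 𝕜] (N Q : 𝕜[X]) {a : 𝕜}
    (hQ : Q.eval a ≠ 0) : deriv (fun z => N.eval z / Q.eval z) a = ratDeriv N Q a :=
  ((N.hasDerivAt a).div (Q.hasDerivAt a) hQ).deriv

end Polynomial

theorem continuous_sum_filter_lt {α M ι : Type*} [TopologicalSpace α] [LinearOrder α]
    [OrderClosedTopology α] [AddCommMonoid M] [TopologicalSpace M] [ContinuousAdd M]
    [Fintype ι] (a : ι → α) (f : ι → α → M) (hf : ∀ i, Continuous (f i))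
    (hfa : ∀ i, f i (a i) = 0) :
    Continuous fun t => ∑ i ∈ univ.filter (fun i => a i < t), f i t := by
  simp only [sum_filter]
  refine continuous_finsetSum _ fun i _ => ?_
  simp only [← not_le, ite_not]
  exact continuous_const.if_le (hf i) continuous_id continuous_const
    fun t ht => by rw [ht, hfa]

/-- Each residue `I_i(t) = Res_{z=λᵢ} (-(z-t)^(2n-2)/p_Λ(z)^2)` — computed at the double pole
`λᵢ` as the derivative at `λᵢ` of `z ↦ (z-λᵢ)^2 · S(z,t)` — is a polynomial in `t` vanishing
at `λᵢ`, and `I(t) = ∑_{i : λᵢ < t} I_i(t)` is continuous and supported on `[min λᵢ, max λᵢ]`. -/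
theorem stmt6 (n : ℕ) (hn : 2 ≤ n) (lam : Fin n → ℝ) (hdist : Function.Injective lam)
    (Ires : Fin n → ℝ → ℝ)
    (hIres : ∀ i t, Ires i t =
      deriv (fun z : ℝ => -(z - t) ^ (2 * n - 2) /
        ∏ k ∈ univ.erase i, (z - lam k) ^ 2) (lam i))
    (I : ℝ → ℝ)
    (hI : ∀ t, I t = ∑ i ∈ univ.filter (fun i => lam i < t), Ires i t) :
    (∀ i, (∃ P : Polynomial ℝ, ∀ t, Ires i t = P.eval t) ∧ Ires i (lam i) = 0) ∧
      Continuous I ∧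
      (∀ t, t ∉ Icc (⨅ i, lam i) (⨆ i, lam i) → I t = 0) := by
  have hres (i : Fin n) (t : ℝ) :
      Ires i t = ratDeriv (-(X - C t) ^ (2 * n - 2)) (sqCofactor lam i) (lam i) := by
    rw [hIres, ← deriv_eval_div_eval _ _ (eval_sqCofactor_self_ne_zero hdist i)]
    simp [sqCofactor, eval_prod]
  have hpoly (i : Fin n) : ∃ P : ℝ[X], ∀ t, Ires i t = P.eval t := by
    simpa only [hres] using exists_eval_eq_ratDeriv_neg_X_sub_C_pow _ _ (lam i)
  have hzero (i : Fin n) : Ires i (lam i) = 0 := by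
    rw [hres, ratDeriv_neg_X_sub_C_pow, sub_self, zero_pow (by omega), zero_pow (by omega)]
    ring
  have hcont (i : Fin n) : Continuous (Ires i) := by
    obtain ⟨P, hP⟩ := hpoly i
    simpa only [← hP] using P.continuous
  refine ⟨fun i => ⟨hpoly i, hzero i⟩, ?_, fun t ht => ?_⟩
  · simpa only [← hI] using continuous_sum_filter_lt lam Ires hcont hzero
  rw [hI]
  rcases not_and_or.mp ht with hlow | hhigh
  · exact sum_eq_zero fun i hi =>
      (hlow ((ciInf_le (finite_range lam).bddBelow i).trans (mem_filter.mp hi).2.le)).elim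
  · rw [filter_true_of_mem fun i _ =>
      (le_ciSup (finite_range lam).bddAbove i).trans_lt (not_le.mp hhigh)]
    simpa only [hres] using sum_ratDeriv_sqCofactor_eq_zero hdist
      (N := -(X - C t) ^ (2 * n - 2)) (by
        simp only [natDegree_neg, natDegree_pow, natDegree_sub_C, natDegree_X, mul_one,
          Fintype.card_fin]
        omega)
end

section
/- Let λ₁, ..., λₙ be distinct reals, p_Λ(z) = ∏(z−λᵢ), I_i(t) = Res_{w=λᵢ}(−(w−t)^{2n−2}/p_Λ(w)²), and I(t) = Σ_{i : λᵢ < t} I_i(t). Then for every z ∈ ℂ outside the interval [min λᵢ, max λᵢ], (2n−1) ∫_{−∞}^{∞} I(t)/(z−t)^{2n} dt = 1/p_Λ(z)². -/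
/-!
Hermite interpolation at the doubled nodes `λᵢ` gives the partial fractions
`1 / p(z)² = ∑ᵢ (aᵢ / (z - λᵢ)² + bᵢ / (z - λᵢ))`, and shows that the residues `I_i(t)` of
`-(w - t)^(2n-2) / p(w)²` add up to the coefficient of `w^(2n-1)` in the numerator, which is `0`;
so `I` vanishes to the right of all nodes. In the variable `r = (λᵢ - t) / (z - t)` the function
`I_i(t) / (z - t)^(2n)` becomes a Beta integrand, which gives a primitive `Φᵢ` vanishing at `λᵢ`
and tending to `(aᵢ / (z - λᵢ)² + bᵢ / (z - λᵢ)) / (2n - 1)` at `±∞`. The integral is therefore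
`∑ᵢ Φᵢ(max λ)`, and since `∑ᵢ Φᵢ` is locally constant off `z`, this equals its limit at `+∞` or
`-∞`, namely `1 / ((2n - 1) p(z)²)`.
-/

open Finset Set

open Polynomial Lagrange Filter Topology Bornology MeasureTheory

section Hermite

variable {R : Type*} [CommRing R]

theorem sq_X_sub_C_dvd_of_isRoot_derivative {p : R[X]} {a : R} (h₀ : p.IsRoot a)
    (h₁ : (derivative p).IsRoot a) : (X - C a) ^ 2 ∣ p := by
  rcases eq_or_ne p 0 with rfl | hp
  · exact dvd_zero _
  exact (le_rootMultiplicity_iff hp).1 ((one_lt_rootMultiplicity_iff_isRoot hp).2 ⟨h₀, h₁⟩)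

theorem coeff_linear_mul_monic {Q : R[X]} (hQ : Q.Monic) (A B c : R) :
    ((C A + C B * (X - C c)) * Q).coeff (Q.natDegree + 1) = B := by
  have : (C A + C B * (X - C c)) * Q = C B * (X * Q) + C (A - B * c) * Q := by
    simp only [map_sub, map_mul]; ring
  rw [this, coeff_add, coeff_C_mul, coeff_C_mul, coeff_X_mul, hQ.coeff_natDegree,
    coeff_eq_zero_of_natDegree_lt (Nat.lt_succ_self _)]
  ring

variable {K : Type*} [Field K] {ι : Type*} [Fintype ι] [DecidableEq ι] (v : ι → K)

noncomputable def cofactorSq (i : ι) : K[X] := nodal (univ.erase i) v ^ 2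

/-- `hermiteWeight v i` and `hermiteSlope v i` are the value and the derivative at `v i` of
`1 / cofactorSq v i`: the coefficients `aᵢ, bᵢ` of the partial fractions
`1 / ∏ₖ (X - v k)² = ∑ᵢ (aᵢ / (X - v i)² + bᵢ / (X - v i))`. -/
noncomputable def hermiteWeight (i : ι) : K := ((cofactorSq v i).eval (v i))⁻¹

noncomputable def hermiteSlope (i : ι) : K :=
  -(derivative (cofactorSq v i)).eval (v i) * hermiteWeight v i ^ 2

/-- The residue at `v i` of `f / ∏ (X - v k)²`. -/
noncomputable def hermiteResidue (f : K[X]) (i : ι) : K :=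
  (derivative f).eval (v i) * hermiteWeight v i + f.eval (v i) * hermiteSlope v i

theorem hermiteResidue_neg_X_sub_C_pow (k : ℕ) (t : K) (i : ι) :
    hermiteResidue v (-(X - C t) ^ (k + 1)) i =
      -((k + 1) * (v i - t) ^ k) * hermiteWeight v i - (v i - t) ^ (k + 1) * hermiteSlope v i := by
  simp only [hermiteResidue, derivative_neg, derivative_pow, derivative_sub, derivative_X,
    derivative_C, add_tsub_cancel_right, eval_neg, eval_mul, eval_pow, eval_sub, eval_X, eval_C,
    eval_one, eval_zero]
  push_cast
  ring

variable {v}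

theorem eval_cofactorSq_ne_zero (hv : Function.Injective v) (i : ι) :
    (cofactorSq v i).eval (v i) ≠ 0 := by
  rw [cofactorSq, eval_pow]
  exact pow_ne_zero _ (eval_nodal_not_at_node fun k hk => hv.ne (mem_erase.1 hk).1.symm)

theorem natDegree_cofactorSq (i : ι) :
    (cofactorSq v i).natDegree = 2 * Fintype.card ι - 2 := by
  rw [cofactorSq, natDegree_pow, natDegree_nodal, card_erase_of_mem (mem_univ i), card_univ]
  omega

theorem sq_X_sub_C_dvd_cofactorSq {i j : ι} (hij : i ≠ j) : (X - C (v j)) ^ 2 ∣ cofactorSq v i :=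
  pow_dvd_pow_of_dvd (X_sub_C_dvd_nodal v (mem_erase.2 ⟨hij.symm, mem_univ j⟩)) 2

theorem eq_sum_hermite (hv : Function.Injective v) (f : K[X])
    (hf : f.natDegree < 2 * Fintype.card ι) :
    f = ∑ i, (C (f.eval (v i) * hermiteWeight v i) + C (hermiteResidue v f i) * (X - C (v i))) *
      cofactorSq v i := by
  set term : ι → K[X] := fun i =>
    (C (f.eval (v i) * hermiteWeight v i) + C (hermiteResidue v f i) * (X - C (v i))) *
      cofactorSq v i
  have hQ : ∀ j, (cofactorSq v j).eval (v j) * hermiteWeight v j = 1 :=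
    fun j => mul_inv_cancel₀ (eval_cofactorSq_ne_zero hv j)
  have hdvd : ∀ j, (X - C (v j)) ^ 2 ∣ f - ∑ i, term i := by
    intro j
    rw [← add_sum_erase _ _ (mem_univ j), sub_add_eq_sub_sub]
    refine dvd_sub (sq_X_sub_C_dvd_of_isRoot_derivative ?_ ?_)
      (dvd_sum fun i hi => dvd_mul_of_dvd_right (sq_X_sub_C_dvd_cofactorSq (ne_of_mem_erase hi)) _)
    · simp only [IsRoot, term, eval_sub, eval_mul, eval_add, eval_C, eval_X, sub_self, mul_zero,
        add_zero, mul_assoc, mul_comm (hermiteWeight v j), hQ, mul_one]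
    · simp only [IsRoot, term, hermiteResidue, hermiteSlope, derivative_sub, derivative_mul,
        derivative_add, derivative_C, derivative_X, derivative_sub, eval_sub, eval_add, eval_mul,
        eval_C, eval_X, sub_self, mul_zero, add_zero, zero_mul, zero_add, sub_zero, mul_one]
      linear_combination (-(derivative f).eval (v j) +
        f.eval (v j) * (derivative (cofactorSq v j)).eval (v j) * hermiteWeight v j) * hQ j
  have hprod : nodal univ v ^ 2 ∣ f - ∑ i, term i := by
    rw [nodal, ← Finset.prod_pow]
    exact prod_dvd_of_coprime
      (fun i _ j _ hij => (pairwise_coprime_X_sub_C hv hij).pow) fun j _ => hdvd j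
  have hdeg : (f - ∑ i, term i).natDegree < (nodal univ v ^ 2).natDegree := by
    rw [natDegree_pow, natDegree_nodal, card_univ]
    refine (natDegree_sub_le _ _).trans_lt (max_lt hf ?_)
    refine (natDegree_sum_le_of_forall_le _ _ fun i _ => natDegree_mul_le.trans
      (add_le_add (by compute_degree : (C _ + C _ * (X - C _)).natDegree ≤ 1)
        (natDegree_cofactorSq i).le)).trans_lt ?_
    omega
  exact sub_eq_zero.1 (eq_zero_of_dvd_of_natDegree_lt hprod hdeg)

theorem sum_hermiteResidue (hv : Function.Injective v) (f : K[X])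
    (hf : f.natDegree < 2 * Fintype.card ι) :
    ∑ i, hermiteResidue v f i = f.coeff (2 * Fintype.card ι - 1) := by
  conv_rhs => rw [eq_sum_hermite hv f hf, finsetSum_coeff]
  refine sum_congr rfl fun i _ => ?_
  rw [show 2 * Fintype.card ι - 1 = (cofactorSq v i).natDegree + 1 by
    rw [natDegree_cofactorSq]; omega]
  exact (coeff_linear_mul_monic ((nodal_monic).pow 2) _ _ _).symm

theorem inv_prod_sq_eq_sum [Nonempty ι] (hv : Function.Injective v) {L : Type*} [Field L]
    [Algebra K L] (z : L) (hz : ∀ i, z ≠ algebraMap K L (v i)) :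
    ((∏ i, (z - algebraMap K L (v i))) ^ 2)⁻¹ =
      ∑ i, (algebraMap K L (hermiteWeight v i) / (z - algebraMap K L (v i)) ^ 2 +
        algebraMap K L (hermiteSlope v i) / (z - algebraMap K L (v i))) := by
  have h1 := congrArg (aeval z) (eq_sum_hermite hv 1 (by simp [Fintype.card_pos]))
  simp only [map_one, map_sum, map_mul, map_add, map_sub, map_prod, map_pow, aeval_C, aeval_X,
    cofactorSq, nodal, hermiteResidue, derivative_one, eval_one, eval_zero, zero_mul, zero_add,
    one_mul] at h1
  have hne : ∀ i, z - algebraMap K L (v i) ≠ 0 := fun i => sub_ne_zero.2 (hz i)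
  rw [← mul_one (_ ^ 2)⁻¹, h1, mul_sum]
  refine sum_congr rfl fun i _ => ?_
  rw [← mul_prod_erase _ _ (mem_univ i)]
  have := prod_ne_zero_iff.2 fun k (_ : k ∈ univ.erase i) => hne k
  field_simp

theorem hasDerivAt_eval_div_cofactorSq {𝕜 : Type*} [NontriviallyNormedField 𝕜] {v : ι → 𝕜}
    (hv : Function.Injective v) (f : 𝕜[X]) (i : ι) :
    HasDerivAt (fun x => f.eval x / (cofactorSq v i).eval x) (hermiteResidue v f i) (v i) := by
  have hQ := eval_cofactorSq_ne_zero hv i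
  refine ((f.hasDerivAt (v i)).fun_div ((cofactorSq v i).hasDerivAt (v i)) hQ).congr_deriv ?_
  simp only [hermiteResidue, hermiteSlope, hermiteWeight]
  field_simp
  ring

end Hermite

section Primitive

variable (z : ℂ) (c : ℝ)

theorem hasDerivAt_ratio_pow (k : ℕ) {t : ℝ} (ht : (t : ℂ) ≠ z) :
    HasDerivAt (fun s : ℝ => (((c : ℂ) - s) / (z - s)) ^ (k + 1))
      (-((k + 1) * (z - c) * ((c : ℂ) - t) ^ k) / (z - t) ^ (k + 2)) t := by
  have hzt : z - t ≠ 0 := sub_ne_zero.2 ht.symm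
  have hc : HasDerivAt (fun s : ℝ => (c : ℂ) - s) (-1) t := by
    simpa using ((hasDerivAt_id t).ofReal_comp).const_sub (c : ℂ)
  have hz : HasDerivAt (fun s : ℝ => z - s) (-1) t := by
    simpa using ((hasDerivAt_id t).ofReal_comp).const_sub z
  refine ((hc.fun_div hz hzt).fun_pow (k + 1)).congr_deriv ?_
  rw [Nat.add_sub_cancel, div_pow]
  field_simp
  push_cast
  ring

theorem tendsto_ratio_cobounded :
    Tendsto (fun s : ℝ => ((c : ℂ) - s) / (z - s)) (cobounded ℝ) (𝓝 1) := by
  have hinv : Tendsto (fun s : ℝ => (z - s)⁻¹) (cobounded ℝ) (𝓝 0) :=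
    tendsto_inv₀_cobounded.comp
      ((tendsto_const_sub_cobounded z).comp (RCLike.tendsto_ofReal_cobounded_cobounded ℂ))
  have : Tendsto (fun s : ℝ => 1 + (c - z) * (z - s)⁻¹) (cobounded ℝ) (𝓝 1) := by
    simpa using (hinv.const_mul ((c : ℂ) - z)).const_add 1
  refine this.congr' ?_
  filter_upwards [(RCLike.tendsto_ofReal_cobounded_cobounded ℂ).eventually_ne_cobounded z]
    with s hs
  have : z - s ≠ 0 := sub_ne_zero.2 hs.symm
  field_simp
  ring

/-- A primitive of `t ↦ (-(m + 1) a (c - t)^m - b (c - t)^(m + 1)) / (z - t)^(m + 3)` vanishing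
at `c`. With `w = z - c` and `r = (c - t) / (z - t)` one has `1 / (z - t) = (1 - r) / w` and
`dt / (z - t)² = -dr / w`, so the integrand becomes the Beta integrand
`((m + 1) a r^m (1 - r) / w² + b r^(m + 1) / w) dr`. -/
noncomputable def kernelPrimitive (m : ℕ) (a b : ℂ) (t : ℝ) : ℂ :=
  a / (z - c) ^ 2 * (((c : ℂ) - t) / (z - t)) ^ (m + 1) +
    (b / (z - c) - (m + 1) * a / (z - c) ^ 2) / (m + 2) * (((c : ℂ) - t) / (z - t)) ^ (m + 2)

variable {z c}

theorem hasDerivAt_kernelPrimitive (m : ℕ) (a b : ℂ) (hc : (c : ℂ) ≠ z) {t : ℝ}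
    (ht : (t : ℂ) ≠ z) :
    HasDerivAt (kernelPrimitive z c m a b)
      ((-(m + 1) * a * ((c : ℂ) - t) ^ m - b * ((c : ℂ) - t) ^ (m + 1)) / (z - t) ^ (m + 3))
      t := by
  have hzc : z - c ≠ 0 := sub_ne_zero.2 hc.symm
  have hzt : z - t ≠ 0 := sub_ne_zero.2 ht.symm
  have hm : (m : ℂ) + 2 ≠ 0 := by norm_cast
  refine (((hasDerivAt_ratio_pow z c m ht).const_mul _).fun_add
    ((hasDerivAt_ratio_pow z c (m + 1) ht).const_mul _)).congr_deriv ?_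
  rw [show m + 1 + 2 = m + 3 by ring]
  field_simp
  push_cast
  ring

@[simp]
theorem kernelPrimitive_self (m : ℕ) (a b : ℂ) : kernelPrimitive z c m a b c = 0 := by
  simp [kernelPrimitive]

theorem tendsto_kernelPrimitive (m : ℕ) (a b : ℂ) (hc : (c : ℂ) ≠ z) :
    Tendsto (kernelPrimitive z c m a b) (cobounded ℝ)
      (𝓝 ((a / (z - c) ^ 2 + b / (z - c)) / (m + 2))) := by
  have hzc : z - c ≠ 0 := sub_ne_zero.2 hc.symm
  have hm : (m : ℂ) + 2 ≠ 0 := by norm_cast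
  have hr := tendsto_ratio_cobounded z c
  have := ((hr.pow (m + 1)).const_mul (a / (z - c) ^ 2)).add
    ((hr.pow (m + 2)).const_mul ((b / (z - c) - (m + 1) * a / (z - c) ^ 2) / (m + 2)))
  rw [one_pow, one_pow, mul_one, mul_one] at this
  unfold kernelPrimitive
  convert this using 2
  field_simp
  ring

end Primitive

section Calculus

variable {E : Type*} [NormedAddCommGroup E] [NormedSpace ℝ E]

/-- Off a single point, `ℝ` still contains a ray through `x`, on which `f` is constant. -/
theorem eq_of_hasDerivAt_eq_zero_of_tendsto_cobounded {f : ℝ → E} {s : Set ℝ}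
    (hs : s.Subsingleton) (hf : ∀ t ∉ s, HasDerivAt f 0 t) {L : E}
    (hL : Tendsto f (cobounded ℝ) (𝓝 L)) {x : ℝ} (hx : x ∉ s) : f x = L := by
  have hconst : ∀ a b, a ≤ b → (∀ t ∈ Set.Icc a b, t ∉ s) → f b = f a := fun a b hab h =>
    constant_of_has_deriv_right_zero
      (fun t ht => (hf t (h t ht)).continuousAt.continuousWithinAt)
      (fun t ht => (hf t (h t (Ico_subset_Icc_self ht))).hasDerivWithinAt) b ⟨hab, le_rfl⟩
  rcases em (∃ t₀, x ≤ t₀ ∧ t₀ ∈ s) with ⟨t₀, hxt₀, ht₀⟩ | hright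
  · have hleft : ∀ t ≤ x, t ∉ s := fun t htx hts =>
      hx (le_antisymm htx (hs hts ht₀ ▸ hxt₀) ▸ hts)
    refine tendsto_nhds_unique (tendsto_const_nhds.congr' ?_)
      (hL.mono_left IsOrderBornology.atBot_le_cobounded)
    filter_upwards [eventually_le_atBot x] with t ht
    exact hconst t x ht fun u hu => hleft u hu.2
  · refine tendsto_nhds_unique (tendsto_const_nhds.congr' ?_)
      (hL.mono_left IsOrderBornology.atTop_le_cobounded)
    filter_upwards [eventually_ge_atTop x] with t ht
    exact (hconst x t ht fun u hu hus => hright ⟨u, hu.1, hus⟩).symm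

theorem integral_sum_indicator_Ioc_eq {ι : Type*} [Fintype ι] [CompleteSpace E] {c : ι → ℝ}
    {M : ℝ} (hc : ∀ i, c i ≤ M) {g Φ : ι → ℝ → E}
    (hΦ : ∀ i, ∀ t ∈ Set.Icc (c i) M, HasDerivAt (Φ i) (g i t) t)
    (hg : ∀ i, ContinuousOn (g i) (Set.Icc (c i) M)) :
    ∫ t, ∑ i, (Set.Ioc (c i) M).indicator (g i) t = ∑ i, (Φ i M - Φ i (c i)) := by
  rw [integral_finsetSum _ fun i _ =>
    ((hg i).integrableOn_Icc.mono_set Ioc_subset_Icc_self).integrable_indicator measurableSet_Ioc]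
  refine sum_congr rfl fun i _ => ?_
  rw [integral_indicator measurableSet_Ioc, ← intervalIntegral.integral_of_le (hc i)]
  exact intervalIntegral.integral_eq_sub_of_hasDerivAt
    (fun t ht => hΦ i t (by rwa [uIcc_of_le (hc i)] at ht))
    ((hg i).intervalIntegrable_of_Icc (hc i))

end Calculus

section ResidueKernel

variable {ι : Type*} [Fintype ι] [DecidableEq ι] (v : ι → ℝ)

/-- The paper's `I_i(t)`: the residue at `v i` of `-(w - t)^(2N - 2) / ∏ₖ (w - v k)²`. -/
noncomputable def localResidue (i : ι) (t : ℝ) : ℝ :=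
  hermiteResidue v (-(X - C t) ^ (2 * Fintype.card ι - 2)) i

/-- The paper's `I(t)`. -/
noncomputable def residueKernel (t : ℝ) : ℝ :=
  ∑ i ∈ univ.filter (fun i => v i < t), localResidue v i t

theorem localResidue_eq {m : ℕ} (hm : 2 * Fintype.card ι = m + 3) (i : ι) (t : ℝ) :
    localResidue v i t = -((m + 1) * (v i - t) ^ m) * hermiteWeight v i -
      (v i - t) ^ (m + 1) * hermiteSlope v i := by
  rw [localResidue, show 2 * Fintype.card ι - 2 = m + 1 by omega, hermiteResidue_neg_X_sub_C_pow]

theorem continuous_localResidue {m : ℕ} (hm : 2 * Fintype.card ι = m + 3) (i : ι) :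
    Continuous (localResidue v i) := by
  rw [funext (localResidue_eq v hm i)]
  fun_prop

variable {v}

theorem sum_localResidue [Nonempty ι] (hv : Function.Injective v) (t : ℝ) :
    ∑ i, localResidue v i t = 0 := by
  have hdeg : (-(X - C t) ^ (2 * Fintype.card ι - 2)).natDegree = 2 * Fintype.card ι - 2 := by
    rw [natDegree_neg, natDegree_pow, natDegree_X_sub_C, mul_one]
  have hcard := Fintype.card_pos (α := ι)
  exact (sum_hermiteResidue hv _ (by omega)).trans (coeff_eq_zero_of_natDegree_lt (by omega))

theorem residueKernel_mul_eq_sum_indicator [Nonempty ι] (hv : Function.Injective v) {M : ℝ}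
    (hM : ∀ i, v i ≤ M) (φ : ℝ → ℂ) (t : ℝ) :
    (residueKernel v t : ℂ) * φ t =
      ∑ i, (Set.Ioc (v i) M).indicator (fun s => (localResidue v i s : ℂ) * φ s) t := by
  rcases le_or_gt t M with htM | hMt
  · simp only [residueKernel, sum_filter, Complex.ofReal_sum, sum_mul, Set.indicator_apply,
      Set.mem_Ioc, htM, and_true]
    refine sum_congr rfl fun i _ => ?_
    split_ifs <;> simp
  · have : residueKernel v t = 0 := by
      rw [residueKernel, filter_true_of_mem fun i _ => (hM i).trans_lt hMt, sum_localResidue hv]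
    simp [this, Set.indicator_of_notMem, hMt.not_ge]

variable {z : ℂ} {m : ℕ}

theorem hasDerivAt_kernelPrimitive_localResidue (hm : 2 * Fintype.card ι = m + 3) (i : ι)
    (hvz : (v i : ℂ) ≠ z) {t : ℝ} (ht : (t : ℂ) ≠ z) :
    HasDerivAt (kernelPrimitive z (v i) m (hermiteWeight v i : ℝ) (hermiteSlope v i : ℝ))
      ((localResidue v i t : ℂ) / (z - t) ^ (2 * Fintype.card ι)) t := by
  convert hasDerivAt_kernelPrimitive m _ _ hvz ht using 1
  rw [localResidue_eq v hm, hm]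
  push_cast
  ring

/-- Off `z` the sum has derivative `∑ᵢ I_i(t) / (z - t)^(2N) = 0`, and it tends to the right-hand
side at `±∞`. -/
theorem sum_kernelPrimitive_eq (hv : Function.Injective v) (hm : 2 * Fintype.card ι = m + 3)
    (hvz : ∀ i, (v i : ℂ) ≠ z) {x : ℝ} (hx : (x : ℂ) ≠ z) :
    ∑ i, kernelPrimitive z (v i) m (hermiteWeight v i : ℝ) (hermiteSlope v i : ℝ) x =
      (∑ i, ((hermiteWeight v i : ℝ) / (z - v i) ^ 2 + (hermiteSlope v i : ℝ) / (z - v i))) /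
        (m + 2) := by
  have : Nonempty ι := Fintype.card_pos_iff.1 (by omega)
  rw [sum_div]
  refine eq_of_hasDerivAt_eq_zero_of_tendsto_cobounded (s := {t : ℝ | (t : ℂ) = z})
    (fun t ht u hu => Complex.ofReal_injective (ht.trans hu.symm)) (fun t ht => ?_)
    (tendsto_finsetSum _ fun i _ => tendsto_kernelPrimitive m _ _ (hvz i)) hx
  convert HasDerivAt.fun_sum fun i (_ : i ∈ Finset.univ) =>
    hasDerivAt_kernelPrimitive_localResidue hm i (hvz i) ht
  rw [← sum_div, ← Complex.ofReal_sum, sum_localResidue hv, Complex.ofReal_zero, zero_div]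

end ResidueKernel

theorem integral_residueKernel_div_pow {ι : Type*} [Fintype ι] [DecidableEq ι] {v : ι → ℝ}
    (hv : Function.Injective v) (hcard : 2 ≤ Fintype.card ι) {z : ℂ}
    (hz : ∀ s ∈ Set.Icc (⨅ i, v i) (⨆ i, v i), z ≠ (s : ℂ)) :
    (2 * Fintype.card ι - 1 : ℂ) *
        ∫ t : ℝ, (residueKernel v t : ℂ) / (z - t) ^ (2 * Fintype.card ι) =
      ((∏ i, (z - (v i : ℂ))) ^ 2)⁻¹ := by
  have : Nonempty ι := Fintype.card_pos_iff.1 (by omega)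
  obtain ⟨m, hm⟩ : ∃ m, 2 * Fintype.card ι = m + 3 := ⟨2 * Fintype.card ι - 3, by omega⟩
  set M := ⨆ i, v i
  have hvM : ∀ i, v i ≤ M := le_ciSup (Set.finite_range v).bddAbove
  have hzIcc : ∀ i, ∀ t ∈ Set.Icc (v i) M, (t : ℂ) ≠ z := fun i t ht =>
    (hz t ⟨(ciInf_le (Set.finite_range v).bddBelow i).trans ht.1, ht.2⟩).symm
  have hvz : ∀ i, (v i : ℂ) ≠ z := fun i => hzIcc i (v i) ⟨le_rfl, hvM i⟩
  have hcont : ∀ i, ContinuousOn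
      (fun t : ℝ => (localResidue v i t : ℂ) / (z - t) ^ (2 * Fintype.card ι))
      (Set.Icc (v i) M) :=
    fun i => (Complex.continuous_ofReal.comp (continuous_localResidue v hm i)).continuousOn.div
      (by fun_prop) fun t ht => pow_ne_zero _ (sub_ne_zero.2 (hzIcc i t ht).symm)
  have hint : ∫ t : ℝ, (residueKernel v t : ℂ) / (z - t) ^ (2 * Fintype.card ι) =
      ∑ i, kernelPrimitive z (v i) m (hermiteWeight v i : ℝ) (hermiteSlope v i : ℝ) M := by
    simp_rw [div_eq_mul_inv, residueKernel_mul_eq_sum_indicator hv hvM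
      (fun t : ℝ => ((z - t) ^ (2 * Fintype.card ι))⁻¹), ← div_eq_mul_inv]
    rw [integral_sum_indicator_Ioc_eq hvM (fun i t ht =>
      hasDerivAt_kernelPrimitive_localResidue hm i (hvz i) (hzIcc i t ht)) hcont]
    simp
  have hN : (2 * Fintype.card ι - 1 : ℂ) = m + 2 := by
    have : ((2 * Fintype.card ι : ℕ) : ℂ) = m + 3 := by exact_mod_cast hm
    push_cast at this
    linear_combination this
  have hpf := inv_prod_sq_eq_sum hv z fun i => by simpa using (hvz i).symm
  simp only [Complex.coe_algebraMap] at hpf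
  have : (m : ℂ) + 2 ≠ 0 := by norm_cast
  rw [hint, sum_kernelPrimitive_eq hv hm hvz (hzIcc _ M ⟨hvM (Classical.arbitrary ι), le_rfl⟩),
    hpf, hN]
  field_simp

/-- Integral identity for the weight `I`: for `z` outside `[min λᵢ, max λᵢ]`,
`(2n-1) ∫ I(t)/(z-t)^(2n) dt = 1/p_Λ(z)^2`. -/
theorem stmt7 (n : ℕ) (hn : 2 ≤ n) (lam : Fin n → ℝ) (hdist : Function.Injective lam)
    (Ires : Fin n → ℝ → ℝ)
    (hIres : ∀ i t, Ires i t =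
      deriv (fun z : ℝ => -(z - t) ^ (2 * n - 2) /
        ∏ k ∈ univ.erase i, (z - lam k) ^ 2) (lam i))
    (I : ℝ → ℝ)
    (hI : ∀ t, I t = ∑ i ∈ univ.filter (fun i => lam i < t), Ires i t)
    (z : ℂ) (hz : ∀ s ∈ Icc (⨅ i, lam i) (⨆ i, lam i), z ≠ (s : ℂ)) :
    (2 * n - 1 : ℂ) * ∫ t : ℝ, (I t : ℂ) / (z - (t : ℂ)) ^ (2 * n) =
      ((∏ i, (z - (lam i : ℂ))) ^ 2)⁻¹ := by
  have hres : ∀ i t, Ires i t = localResidue lam i t := fun i t => by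
    rw [hIres, localResidue, Fintype.card_fin,
      ← (hasDerivAt_eval_div_cofactorSq hdist (-(X - C t) ^ (2 * n - 2)) i).deriv]
    congr 1 with w
    simp [cofactorSq, eval_nodal, Finset.prod_pow]
  have hkernel : I = residueKernel lam := funext fun t => by
    rw [hI, residueKernel]
    exact sum_congr rfl fun i _ => hres i t
  simpa [hkernel] using integral_residueKernel_div_pow hdist (by simpa using hn) hz
end

section
/- Let λ₁, ..., λₙ be distinct reals. The weight function I(t) = Σ_{i : λᵢ < t} Res_{z=λᵢ}(−(z−t)^{2n−2}/p_Λ(z)²), with p_Λ(z) = ∏(z−λᵢ), is non-negative for all t ∈ ℝ. -/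
/-!
Write `Qᵢ = ∏_{k ≠ i} (X - λₖ)²`. The residue at `λᵢ` is `-(g / Qᵢ)'(λᵢ)` with `g = (X - t)^(2n-2)`,
and `(g / Qᵢ)'(λᵢ)` is the coefficient of `(X - λᵢ) Qᵢ` in the Hermite interpolant of `g` at the
doubled nodes; it depends only on `g(λᵢ)` and `g'(λᵢ)`. Hence `I(t) = -c`, where `c` is the
`X^(2n-1)`-coefficient of the Hermite interpolant `H` of the truncated power
`g₋(x) = min(x - t, 0)^(2n-2)`, i.e. the divided difference `g₋[λ₁, λ₁, …, λₙ, λₙ]`; this is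
because `g₋` agrees with `g` to first order at `λᵢ < t` and vanishes to first order at `λᵢ ≥ t`.

Suppose `c > 0`. Then `H - g₋` vanishes to second order at the `n` nodes, so by Rolle its
derivative has `2n - 1` zeros and its `(2n-3)`-rd derivative has three. But that derivative is a
quadratic with leading coefficient a positive multiple of `c` minus a nonnegative multiple of the
concave function `min(x - t, 0)`, hence strictly convex, and cannot have three zeros.
-/

open Finset Polynomial

theorem exists_finset_deriv_eq_zero {f : ℝ → ℝ} (hf : Continuous f) {s : Finset ℝ}
    (hs : ∀ x ∈ s, f x = 0) :
    ∃ u : Finset ℝ, Disjoint s u ∧ #s ≤ #u + 1 ∧ ∀ x ∈ u, deriv f x = 0 := by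
  have rolle : ∀ x y, ∃ c, x ∈ s → y ∈ s → x < y → c ∈ Set.Ioo x y ∧ deriv f c = 0 := by
    intro x y
    by_cases h : x ∈ s ∧ y ∈ s ∧ x < y
    · obtain ⟨c, hc, hc0⟩ := exists_deriv_eq_zero h.2.2 hf.continuousOn
        ((hs x h.1).trans (hs y h.2.1).symm)
      exact ⟨c, fun _ _ _ => ⟨hc, hc0⟩⟩
    · exact ⟨0, fun hx hy hxy => absurd ⟨hx, hy, hxy⟩ h⟩
  choose c hc using rolle
  set u := ((s ×ˢ s).filter fun p => p.1 < p.2).image fun p => c p.1 p.2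
  have hu : ∀ x ∈ u, deriv f x = 0 := by
    simp only [u, mem_image, mem_filter, mem_product]
    rintro _ ⟨⟨x, y⟩, ⟨⟨hx, hy⟩, hxy⟩, rfl⟩
    exact (hc x y hx hy hxy).2
  refine ⟨u \ s, disjoint_sdiff, card_le_sdiff_of_interleaved fun x hx y hy hxy _ => ?_,
    fun x hx => hu x (mem_sdiff.1 hx).1⟩
  exact ⟨c x y, mem_image.2 ⟨(x, y), mem_filter.2 ⟨mem_product.2 ⟨hx, hy⟩, hxy⟩, rfl⟩,
    (hc x y hx hy hxy).1⟩

theorem exists_finset_deriv_eq_zero_of_double_zeros {f : ℝ → ℝ} (hf : Continuous f)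
    {s : Finset ℝ} (hs : ∀ x ∈ s, f x = 0) (hs' : ∀ x ∈ s, deriv f x = 0) :
    ∃ u : Finset ℝ, 2 * #s ≤ #u + 1 ∧ ∀ x ∈ u, deriv f x = 0 := by
  obtain ⟨u, hsu, hcard, hu⟩ := exists_finset_deriv_eq_zero hf hs
  refine ⟨s ∪ u, ?_, fun x hx => (mem_union.1 hx).elim (hs' x) (hu x)⟩
  rw [card_union_of_disjoint hsu]
  omega

theorem StrictConvexOn.card_le_two_of_eq {f : ℝ → ℝ} (hf : StrictConvexOn ℝ Set.univ f)
    {s : Finset ℝ} {a : ℝ} (hs : ∀ x ∈ s, f x = a) : #s ≤ 2 := by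
  by_contra! h
  have hne : s.Nonempty := card_pos.1 (by omega)
  obtain ⟨y, hy⟩ : ((s.erase (s.min' hne)).erase (s.max' hne)).Nonempty := by
    rw [← card_pos, card_erase_of_mem, card_erase_of_mem (min'_mem s hne)]
    · omega
    · exact mem_erase.2 ⟨(min'_lt_max'_of_card s (by omega)).ne', max'_mem s hne⟩
  obtain ⟨hy_max, hy_min, hys⟩ := by simpa only [mem_erase] using hy
  have hmin := lt_of_le_of_ne (min'_le s y hys) (Ne.symm hy_min)
  have hmax := lt_of_le_of_ne (le_max' s y hys) hy_max
  have := hf.lt_on_openSegment (Set.mem_univ _) (Set.mem_univ _) (hmin.trans hmax).ne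
    (by rw [openSegment_eq_Ioo (hmin.trans hmax)]; exact ⟨hmin, hmax⟩)
  rw [hs y hys, hs _ (min'_mem s hne), hs _ (max'_mem s hne), max_self] at this
  exact lt_irrefl a this

theorem strictConvexOn_eval_of_natDegree_le_two {q : ℝ[X]} (hq : q.natDegree ≤ 2)
    (hc : 0 < q.coeff 2) : StrictConvexOn ℝ Set.univ fun x => q.eval x := by
  have hderiv : ∀ r : ℝ[X], deriv (fun x => r.eval x) = fun x => r.derivative.eval x :=
    fun r => funext fun x => r.deriv
  have hq'' : derivative (derivative q) = C (2 * q.coeff 2) := by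
    have h := eq_C_of_natDegree_le_zero ((natDegree_iterate_derivative q 2).trans (by omega))
    rw [coeff_iterate_derivative] at h
    simpa using h
  refine strictConvexOn_of_deriv2_pos' convex_univ q.continuous.continuousOn fun x _ => ?_
  simp only [Function.iterate_succ, Function.iterate_zero, Function.comp_apply, hderiv, hq'',
    eval_C, id]
  positivity

theorem eval_eq_zero_of_sq_dvd {p : ℝ[X]} {x : ℝ} (h : (X - C x) ^ 2 ∣ p) :
    p.eval x = 0 ∧ p.derivative.eval x = 0 := by
  obtain ⟨r, rfl⟩ := h
  simp [derivative_mul, derivative_X_sub_C_sq]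

def truncPow (t : ℝ) (m : ℕ) (x : ℝ) : ℝ := min (x - t) 0 ^ m

theorem truncPow_of_le {t x : ℝ} (hx : x ≤ t) (m : ℕ) : truncPow t m x = (x - t) ^ m := by
  rw [truncPow, min_eq_left (sub_nonpos.2 hx)]

theorem truncPow_of_ge {t x : ℝ} (hx : t ≤ x) {m : ℕ} (hm : m ≠ 0) :
    truncPow t m x = 0 := by
  rw [truncPow, min_eq_right (sub_nonneg.2 hx), zero_pow hm]

theorem hasDerivAt_truncPow (t : ℝ) {m : ℕ} (hm : 2 ≤ m) (x : ℝ) :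
    HasDerivAt (truncPow t m) (m * truncPow t (m - 1) x) x := by
  have left : x ≤ t →
      HasDerivWithinAt (truncPow t m) (m * truncPow t (m - 1) x) (Set.Iic t) x := by
    intro hx
    have h := ((hasDerivAt_id x).sub_const t).pow m
    simp only [id, mul_one] at h
    rw [truncPow_of_le hx]
    exact h.hasDerivWithinAt.congr (fun y hy => truncPow_of_le hy m) (truncPow_of_le hx m)
  have right : t ≤ x →
      HasDerivWithinAt (truncPow t m) (m * truncPow t (m - 1) x) (Set.Ici t) x := by
    intro hx
    rw [truncPow_of_ge hx (by omega : m - 1 ≠ 0), mul_zero]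
    exact (hasDerivWithinAt_const x _ 0).congr (fun y hy => truncPow_of_ge hy (by omega))
      (truncPow_of_ge hx (by omega))
  rcases lt_trichotomy x t with hx | rfl | hx
  · exact (left hx.le).hasDerivAt (Iic_mem_nhds hx)
  · simpa [Set.Iic_union_Ici] using (left le_rfl).union (right le_rfl)
  · exact (right hx.le).hasDerivAt (Ici_mem_nhds hx)

theorem concaveOn_truncPow_one (t : ℝ) : ConcaveOn ℝ Set.univ (truncPow t 1) :=
  (((concaveOn_id convex_univ).add_const (-t)).inf (concaveOn_const 0 convex_univ)).congr
    fun x _ => by simp [truncPow, sub_eq_add_neg]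

/-- The `k`-th derivative of `x ↦ p(x) - truncPow t m x`, valid for `k < m`. -/
noncomputable def iterDerivSubTruncPow (p : ℝ[X]) (t : ℝ) (m k : ℕ) (x : ℝ) : ℝ :=
  (derivative^[k] p).eval x - m.descFactorial k * truncPow t (m - k) x

theorem hasDerivAt_iterDerivSubTruncPow (p : ℝ[X]) (t : ℝ) {m k : ℕ} (hk : k + 2 ≤ m)
    (x : ℝ) :
    HasDerivAt (iterDerivSubTruncPow p t m k) (iterDerivSubTruncPow p t m (k + 1) x) x := by
  refine (((derivative^[k] p).hasDerivAt x).sub ((hasDerivAt_truncPow t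
    (by omega : 2 ≤ m - k) x).const_mul (m.descFactorial k : ℝ))).congr_deriv ?_
  rw [iterDerivSubTruncPow, Function.iterate_succ_apply', Nat.descFactorial_succ,
    Nat.cast_mul, Nat.cast_sub (by omega), show m - (k + 1) = m - k - 1 by omega]
  ring

theorem strictConvexOn_iterDerivSubTruncPow (p : ℝ[X]) (t : ℝ) {m : ℕ} (hm : 1 ≤ m)
    (hp : p.natDegree ≤ m + 1) (hc : 0 < p.coeff (m + 1)) :
    StrictConvexOn ℝ Set.univ (iterDerivSubTruncPow p t m (m - 1)) := by
  have hdeg : (derivative^[m - 1] p).natDegree ≤ 2 :=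
    (natDegree_iterate_derivative p _).trans (by omega)
  have hcoeff : 0 < (derivative^[m - 1] p).coeff 2 := by
    rw [coeff_iterate_derivative, show 2 + (m - 1) = m + 1 by omega, nsmul_eq_mul]
    exact mul_pos (by exact_mod_cast Nat.descFactorial_pos.2 (by omega)) hc
  refine ((strictConvexOn_eval_of_natDegree_le_two hdeg hcoeff).sub_concaveOn
    ((concaveOn_truncPow_one t).smul (Nat.cast_nonneg (m.descFactorial (m - 1))))).congr ?_
  intro x _
  simp [iterDerivSubTruncPow, show m - (m - 1) = 1 by omega]

namespace HermiteInterpolation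

variable {n : ℕ} (lam : Fin n → ℝ)

noncomputable def nodeFactor (i : Fin n) : ℝ[X] := ∏ k ∈ univ.erase i, (X - C (lam k)) ^ 2

/-- The derivative at `λᵢ` of `g / Qᵢ` for any `g` with `g(λᵢ) = a i`, `g'(λᵢ) = b i`. -/
noncomputable def slope (a b : Fin n → ℝ) (i : Fin n) : ℝ :=
  (b i * (nodeFactor lam i).eval (lam i) - a i * (nodeFactor lam i).derivative.eval (lam i)) /
    (nodeFactor lam i).eval (lam i) ^ 2

noncomputable def interpolant (a b : Fin n → ℝ) : ℝ[X] :=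
  ∑ i, (C (a i / (nodeFactor lam i).eval (lam i)) * nodeFactor lam i +
    C (slope lam a b i) * ((X - C (lam i)) * nodeFactor lam i))

theorem nodeFactor_monic (i : Fin n) : (nodeFactor lam i).Monic :=
  monic_prod_of_monic _ _ fun k _ => (monic_X_sub_C (lam k)).pow 2

theorem natDegree_nodeFactor (i : Fin n) : (nodeFactor lam i).natDegree = 2 * n - 2 := by
  rw [nodeFactor, natDegree_prod_of_monic _ _ fun k _ => (monic_X_sub_C (lam k)).pow 2]
  simp only [natDegree_pow, natDegree_X_sub_C, sum_const, card_erase_of_mem (mem_univ i),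
    card_univ, Fintype.card_fin, smul_eq_mul]
  omega

theorem natDegree_X_sub_C_mul_nodeFactor (i : Fin n) :
    ((X - C (lam i)) * nodeFactor lam i).natDegree = 2 * n - 1 := by
  rw [(monic_X_sub_C _).natDegree_mul (nodeFactor_monic lam i), natDegree_X_sub_C,
    natDegree_nodeFactor]
  have := i.pos
  omega

theorem sq_dvd_nodeFactor {i j : Fin n} (hij : j ≠ i) :
    (X - C (lam j)) ^ 2 ∣ nodeFactor lam i :=
  dvd_prod_of_mem _ (mem_erase.2 ⟨hij, mem_univ j⟩)

variable {lam}

theorem nodeFactor_eval_ne_zero (hlam : Function.Injective lam) (i : Fin n) :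
    (nodeFactor lam i).eval (lam i) ≠ 0 := by
  rw [nodeFactor, eval_prod, prod_ne_zero_iff]
  intro k hk
  simpa [sub_eq_zero] using hlam.ne (mem_erase.1 hk).1.symm

theorem eval_interpolant (hlam : Function.Injective lam) (a b : Fin n → ℝ) (j : Fin n) :
    (interpolant lam a b).eval (lam j) = a j ∧
      (interpolant lam a b).derivative.eval (lam j) = b j := by
  set S := ∑ i ∈ univ.erase j, (C (a i / (nodeFactor lam i).eval (lam i)) * nodeFactor lam i +
    C (slope lam a b i) * ((X - C (lam i)) * nodeFactor lam i))
  have hS : (X - C (lam j)) ^ 2 ∣ S := dvd_sum fun i hi =>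
    have h := sq_dvd_nodeFactor lam (mem_erase.1 hi).1.symm
    dvd_add (dvd_mul_of_dvd_right h _) (dvd_mul_of_dvd_right (dvd_mul_of_dvd_right h _) _)
  have hq := nodeFactor_eval_ne_zero hlam j
  rw [interpolant, ← add_sum_erase _ _ (mem_univ j), derivative_add, eval_add (q := S),
    eval_add (q := derivative S), (eval_eq_zero_of_sq_dvd hS).1,
    (eval_eq_zero_of_sq_dvd hS).2, add_zero, add_zero, slope]
  constructor
  · simp [hq]
  · simp only [derivative_add, derivative_mul, derivative_C, derivative_X_sub_C, eval_add,
      eval_mul, eval_C, eval_sub, eval_X, eval_one, eval_zero, sub_self]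
    field_simp
    ring

theorem natDegree_interpolant_le (a b : Fin n → ℝ) :
    (interpolant lam a b).natDegree ≤ 2 * n - 1 := by
  refine natDegree_sum_le_of_forall_le _ _ fun i _ => natDegree_add_le_of_degree_le ?_ ?_
  · refine (natDegree_C_mul_le _ _).trans ?_
    rw [natDegree_nodeFactor]
    omega
  · exact (natDegree_C_mul_le _ _).trans (natDegree_X_sub_C_mul_nodeFactor lam i).le

theorem coeff_interpolant (a b : Fin n → ℝ) :
    (interpolant lam a b).coeff (2 * n - 1) = ∑ i, slope lam a b i := by
  rw [interpolant, finsetSum_coeff]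
  refine sum_congr rfl fun i _ => ?_
  have hQ : (nodeFactor lam i).coeff (2 * n - 1) = 0 :=
    coeff_eq_zero_of_natDegree_lt (by rw [natDegree_nodeFactor]; have := i.pos; omega)
  have hXQ : ((X - C (lam i)) * nodeFactor lam i).coeff (2 * n - 1) = 1 := by
    rw [← natDegree_X_sub_C_mul_nodeFactor lam i]
    exact ((monic_X_sub_C _).mul (nodeFactor_monic lam i)).coeff_natDegree
  rw [coeff_add, coeff_C_mul, coeff_C_mul, hQ, hXQ, mul_zero, zero_add, mul_one]

theorem deriv_neg_pow_div_prod (hlam : Function.Injective lam) (t : ℝ) (m : ℕ) (i : Fin n) :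
    deriv (fun z : ℝ => -(z - t) ^ m / ∏ k ∈ univ.erase i, (z - lam k) ^ 2) (lam i) =
      -slope lam (fun j => ((X - C t) ^ m).eval (lam j))
        (fun j => ((X - C t) ^ m).derivative.eval (lam j)) i := by
  have h := (((X - C t) ^ m).hasDerivAt (lam i)).div ((nodeFactor lam i).hasDerivAt (lam i))
    (nodeFactor_eval_ne_zero hlam i)
  refine (h.neg.congr_of_eventuallyEq (Filter.Eventually.of_forall fun z => ?_)).deriv
  simp [nodeFactor, eval_prod, neg_div]

theorem sum_filter_slope_pow_eq_sum_slope_truncPow {m : ℕ} (hm : 2 ≤ m) (t : ℝ) :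
    ∑ i ∈ univ.filter (fun i => lam i < t), slope lam (fun j => ((X - C t) ^ m).eval (lam j))
      (fun j => ((X - C t) ^ m).derivative.eval (lam j)) i =
    ∑ i, slope lam (fun j => truncPow t m (lam j))
      (fun j => m * truncPow t (m - 1) (lam j)) i := by
  rw [sum_filter]
  refine sum_congr rfl fun i _ => ?_
  split_ifs with h
  · simp [slope, truncPow_of_le h.le, derivative_X_sub_C_pow]
  · simp [slope, truncPow_of_ge (not_lt.1 h), show m - 1 ≠ 0 by omega, show m ≠ 0 by omega]

theorem coeff_interpolant_truncPow_nonpos {m : ℕ} (hm : 2 ≤ m) (hmn : m + 2 = 2 * n)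
    (hlam : Function.Injective lam) (t : ℝ) :
    (interpolant lam (fun i => truncPow t m (lam i))
      (fun i => m * truncPow t (m - 1) (lam i))).coeff (2 * n - 1) ≤ 0 := by
  by_contra! hc
  set H := interpolant lam (fun i => truncPow t m (lam i))
    (fun i => m * truncPow t (m - 1) (lam i))
  set F := iterDerivSubTruncPow H t m
  have hF : ∀ k, k + 2 ≤ m → Continuous (F k) ∧ deriv (F k) = F (k + 1) := fun k hk =>
    have hD x := hasDerivAt_iterDerivSubTruncPow H t hk x
    ⟨Differentiable.continuous fun x => (hD x).differentiableAt,
      funext fun x => (hD x).deriv⟩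
  have hnodes : ∀ x ∈ univ.image lam, F 0 x = 0 ∧ deriv (F 0) x = 0 := by
    simp only [mem_image, mem_univ, true_and, forall_exists_index, forall_apply_eq_imp_iff]
    intro j
    obtain ⟨h0, h1⟩ : H.eval (lam j) = _ ∧ H.derivative.eval (lam j) = _ :=
      eval_interpolant hlam _ _ j
    simp [(hF 0 hm).2, F, iterDerivSubTruncPow, h0, h1]
  have hzeros : ∀ j, j + 2 ≤ m →
      ∃ s : Finset ℝ, m + 1 - j ≤ #s ∧ ∀ x ∈ s, F (j + 1) x = 0 := by
    intro j hj
    induction j with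
    | zero =>
      obtain ⟨s, hs, hs0⟩ := exists_finset_deriv_eq_zero_of_double_zeros (hF 0 hm).1
        (fun x hx => (hnodes x hx).1) (fun x hx => (hnodes x hx).2)
      rw [card_image_of_injective _ hlam, card_univ, Fintype.card_fin] at hs
      exact ⟨s, by omega, fun x hx => (hF 0 hm).2 ▸ hs0 x hx⟩
    | succ j ih =>
      obtain ⟨s, hs, hs0⟩ := ih (by omega)
      obtain ⟨u, -, hu, hu0⟩ := exists_finset_deriv_eq_zero (hF (j + 1) hj).1 hs0
      exact ⟨u, by omega, fun x hx => (hF (j + 1) hj).2 ▸ hu0 x hx⟩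
  obtain ⟨s, hs, hs0⟩ := hzeros (m - 2) (by omega)
  rw [show m - 2 + 1 = m - 1 by omega] at hs0
  have hconvex := strictConvexOn_iterDerivSubTruncPow H t (by omega : 1 ≤ m)
    ((natDegree_interpolant_le _ _).trans_eq (by omega))
    (by rwa [show m + 1 = 2 * n - 1 by omega])
  have := hconvex.card_le_two_of_eq hs0
  omega

end HermiteInterpolation

/-- The residue of `-(z - t)^(2n-2) / p_Λ(z)²` at the double pole `λᵢ` is the derivative at `λᵢ`
of `-(z - t)^(2n-2) / ∏_{k ≠ i} (z - λₖ)²`. -/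
theorem stmt8 (n : ℕ) (hn : 2 ≤ n) (lam : Fin n → ℝ) (hdist : Function.Injective lam)
    (Ires : Fin n → ℝ → ℝ)
    (hIres : ∀ i t, Ires i t =
      deriv (fun z : ℝ => -(z - t) ^ (2 * n - 2) /
        ∏ k ∈ univ.erase i, (z - lam k) ^ 2) (lam i))
    (I : ℝ → ℝ)
    (hI : ∀ t, I t = ∑ i ∈ univ.filter (fun i => lam i < t), Ires i t) :
    ∀ t, 0 ≤ I t := by
  intro t
  simp_rw [hI, hIres, HermiteInterpolation.deriv_neg_pow_div_prod hdist, sum_neg_distrib,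
    HermiteInterpolation.sum_filter_slope_pow_eq_sum_slope_truncPow (by omega : 2 ≤ 2 * n - 2) t,
    ← HermiteInterpolation.coeff_interpolant, neg_nonneg]
  exact HermiteInterpolation.coeff_interpolant_truncPow_nonpos (by omega) (by omega) hdist t
end

section
/- For distinct real numbers λ₁, ..., λₙ, λ₀ and a function f that is C¹ near the λᵢ, the first-order divided difference of g(x) = [x,λ₀]_f satisfies [λᵢ, λⱼ]_g = [λᵢ, λⱼ, λ₀]_f for all 1 ≤ i, j ≤ n; consequently the Loewner matrix of g at (λ₁,...,λₙ) equals the Kraus matrix of f at (λ₁,...,λₙ) with base point λ₀. -/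
/-! Mathlib's `dslope f c x` is `[x,c]_f`, with `deriv f c` at `x = c`; so `g = dslope f λ₀` and the
claim is `[a,b]_{[·,c]_f} = (a - c)⁻¹ • ([a,b]_f - [b,c]_f)` for `a, b ≠ c`. Off the diagonal this
is the algebra of first divided differences; on the diagonal, near `a ≠ c` the function `[·,c]_f`
is the slope `(x - c)⁻¹ • (f x - f c)`, whose derivative at `a` is, by the product rule,
`(a - c)⁻¹ • (f'(a) - [a,c]_f)`. -/

section
variable {𝕜 E : Type*} [NontriviallyNormedField 𝕜] [NormedAddCommGroup E] [NormedSpace 𝕜 E]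
  {f : 𝕜 → E} {a b c : 𝕜}

theorem hasDerivAt_dslope_of_ne (hf : DifferentiableAt 𝕜 f a) (hac : a ≠ c) :
    HasDerivAt (dslope f c) ((a - c)⁻¹ • (deriv f a - dslope f c a)) a := by
  have hac' : a - c ≠ 0 := sub_ne_zero.mpr hac
  have hinv : HasDerivAt (fun x => (x - c)⁻¹) (-((a - c) ^ 2)⁻¹) a :=
    (hasDerivAt_inv hac').comp_sub_const a c
  have hslope : HasDerivAt (slope f c) ((a - c)⁻¹ • (deriv f a - dslope f c a)) a := by
    convert hinv.smul (hf.hasDerivAt.sub_const (f c)) using 1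
    · exact funext fun x => slope_def_module f c x
    · rw [dslope_of_ne _ hac, slope_def_module]
      match_scalars <;> field_simp
  exact hslope.congr_of_eventuallyEq (dslope_eventuallyEq_slope_of_ne f hac)

theorem dslope_dslope_of_ne (hac : a ≠ c) (hbc : b ≠ c) (hf : a = b → DifferentiableAt 𝕜 f a) :
    dslope (dslope f c) b a = (a - c)⁻¹ • (dslope f b a - dslope f c b) := by
  rcases eq_or_ne a b with rfl | hab
  · rw [dslope_same, dslope_same, (hasDerivAt_dslope_of_ne (hf rfl) hac).deriv]
  · have hab' : a - b ≠ 0 := sub_ne_zero.mpr hab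
    have hac' : a - c ≠ 0 := sub_ne_zero.mpr hac
    have hbc' : b - c ≠ 0 := sub_ne_zero.mpr hbc
    simp only [dslope_of_ne _ hab, dslope_of_ne _ hbc, dslope_of_ne _ hac, slope_def_module]
    match_scalars <;> field_simp <;> ring
end

theorem dslope_eq_ite {𝕜 : Type*} [NontriviallyNormedField 𝕜] [DecidableEq 𝕜]
    (f : 𝕜 → 𝕜) (a b : 𝕜) :
    dslope f b a = if a = b then deriv f a else (f a - f b) / (a - b) := by
  split_ifs with hab
  · rw [hab, dslope_same]
  · rw [dslope_of_ne _ hab, slope_def_field]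

theorem stmt19_general (n : ℕ) (lam : Fin n → ℝ)
    (lam0 : ℝ) (hlam0 : ∀ i, lam0 ≠ lam i)
    (f : ℝ → ℝ) (hf : ∀ i, ContDiffAt ℝ 1 f (lam i))
    (g : ℝ → ℝ)
    (hg : ∀ x, g x = if x = lam0 then deriv f lam0 else (f x - f lam0) / (x - lam0))
    -- first-order divided differences of `f`
    (dd1 : ℝ → ℝ → ℝ)
    (hdd1 : ∀ x y, dd1 x y = if x = y then deriv f x else (f x - f y) / (x - y)) :
    (∀ i j, (if lam i = lam j then deriv g (lam i)
        else (g (lam i) - g (lam j)) / (lam i - lam j)) =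
      (dd1 (lam i) (lam j) - dd1 (lam j) lam0) / (lam i - lam0)) ∧
    (Matrix.of fun i j : Fin n =>
        if lam i = lam j then deriv g (lam i)
        else (g (lam i) - g (lam j)) / (lam i - lam j)) =
      (Matrix.of fun i j : Fin n =>
        (dd1 (lam i) (lam j) - dd1 (lam j) lam0) / (lam i - lam0)) := by
  have hg_eq : g = dslope f lam0 := funext fun x => by
    rw [hg, dslope_eq_ite]
    split_ifs with hx
    · rw [hx]
    · rfl
  have hdd1_eq : dd1 = fun x y => dslope f y x := funext₂ fun x y => by rw [hdd1, dslope_eq_ite]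
  have hentry (i j : Fin n) : dslope g (lam j) (lam i) =
      (dd1 (lam i) (lam j) - dd1 (lam j) lam0) / (lam i - lam0) := by
    rw [hg_eq, hdd1_eq, dslope_dslope_of_ne (hlam0 i).symm (hlam0 j).symm
      fun _ => (hf i).differentiableAt one_ne_zero, smul_eq_mul, inv_mul_eq_div]
  simp only [← dslope_eq_ite]
  exact ⟨hentry, Matrix.ext hentry⟩

/-- For distinct `λ₁,…,λₙ, λ₀` and `f` of class `C¹` near the `λᵢ`, the first-order divided
differences of `g(x) = [x,λ₀]_f` satisfy `[λᵢ,λⱼ]_g = [λᵢ,λⱼ,λ₀]_f`; hence the Loewner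
matrix of `g` equals the Kraus matrix of `f` with base point `λ₀`. -/
theorem stmt19 (n : ℕ) (hn : 1 ≤ n) (lam : Fin n → ℝ) (hdist : Function.Injective lam)
    (lam0 : ℝ) (hlam0 : ∀ i, lam0 ≠ lam i)
    (f : ℝ → ℝ) (hf : ∀ i, ContDiffAt ℝ 1 f (lam i))
    (g : ℝ → ℝ)
    (hg : ∀ x, g x = if x = lam0 then deriv f lam0 else (f x - f lam0) / (x - lam0))
    -- first-order divided differences of `f`
    (dd1 : ℝ → ℝ → ℝ)
    (hdd1 : ∀ x y, dd1 x y = if x = y then deriv f x else (f x - f y) / (x - y)) :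
    (∀ i j, (if lam i = lam j then deriv g (lam i)
        else (g (lam i) - g (lam j)) / (lam i - lam j)) =
      (dd1 (lam i) (lam j) - dd1 (lam j) lam0) / (lam i - lam0)) ∧
    (Matrix.of fun i j : Fin n =>
        if lam i = lam j then deriv g (lam i)
        else (g (lam i) - g (lam j)) / (lam i - lam j)) =
      (Matrix.of fun i j : Fin n =>
        (dd1 (lam i) (lam j) - dd1 (lam j) lam0) / (lam i - lam0)) :=
  stmt19_general n lam lam0 hlam0 f hf g hg dd1 hdd1
end
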